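/- arXiv:2307.07897 — 2 statements merged into one kernel-verified Lean document; each statement's English description precedes it below -/
import Mathlib

section
/- Let $x$ be a set of basic invariants that is good with respect to an admissible triplet $(g,\zeta,q)$ and compatible with a $(g,\zeta)$-graded coordinate system $z$ at $q$. Then for any $a \in \mathbb{Z}_{\geq 0}^n$ with $|a| \geq 2$ and any $\beta$: if $\frac{\partial^a x^\beta}{\partial z^a}(q) \neq 0$, then $a \cdot d = d_\beta + k d_1$ for some integer $k \geq 1$. -/
open MvPolynomial Matrix

noncomputable section

variable {n : ℕ}

/-- Pullback of polynomials along the linear map with matrix `M`: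
`(pback M F)(v) = F (M *ᵥ v)`.  The pullback `g^*F` of the paper is `pback (g⁻¹).val F`. -/
def pback (M : Matrix (Fin n) (Fin n) ℂ) :
    MvPolynomial (Fin n) ℂ →ₐ[ℂ] MvPolynomial (Fin n) ℂ :=
  aeval fun i => ∑ j, C (M i j) * X j

/-- Multi-index partial derivative `∂^a/∂z^a` of a polynomial (in the standard coordinates). -/
def mderiv (a : Fin n → ℕ) (F : MvPolynomial (Fin n) ℂ) : MvPolynomial (Fin n) ℂ :=
  (List.finRange n).foldr (fun i acc => (fun p => pderiv i p)^[a i] acc) F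

/-- The linear coordinate `z^α = ∑_j P_{α j} u^j` of the coordinate system given by `P`. -/
def coordPoly (P : GL (Fin n) ℂ) (α : Fin n) : MvPolynomial (Fin n) ℂ :=
  ∑ j, C (P.val α j) * X j

/-- `∂^a F/∂z^a` evaluated at `q`, where `z = P u` are the coordinates given by `P`. -/
def zderivAt (P : GL (Fin n) ℂ) (a : Fin n → ℕ) (F : MvPolynomial (Fin n) ℂ)
    (q : Fin n → ℂ) : ℂ :=
  eval (P.val *ᵥ q) (mderiv a (pback (P⁻¹).val F))

/-- `g` is a (complex) reflection: it fixes a hyperplane pointwise and is not the identity. -/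
def IsReflection (g : GL (Fin n) ℂ) : Prop :=
  g ≠ 1 ∧
    Module.finrank ℂ (LinearMap.range (Matrix.toLin' (g.val - 1))) = 1

/-- A finite complex reflection group: a finite subgroup generated by its reflections. -/
def IsReflectionGroup (G : Subgroup (GL (Fin n) ℂ)) : Prop :=
  Finite G ∧ Subgroup.closure {g | g ∈ G ∧ IsReflection g} = G

/-- A regular vector: it lies on no reflection hyperplane of `G`. -/
def IsRegularVec (G : Subgroup (GL (Fin n) ℂ)) (q : Fin n → ℂ) : Prop :=
  q ≠ 0 ∧ ∀ g ∈ G, IsReflection g → g.val *ᵥ q ≠ q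

/-- A `ζ`-regular element of `G`: its `ζ`-eigenspace contains a regular vector. -/
def IsZetaRegular (G : Subgroup (GL (Fin n) ℂ)) (g : GL (Fin n) ℂ) (ζ : ℂ) : Prop :=
  g ∈ G ∧ ∃ q, IsRegularVec G q ∧ g.val *ᵥ q = ζ • q

/-- A set of basic invariants of `G` with degrees `d`. -/
structure BasicInvariants (G : Subgroup (GL (Fin n) ℂ)) (d : Fin n → ℕ)
    (x : Fin n → MvPolynomial (Fin n) ℂ) : Prop where
  pos : ∀ α, 0 < d α
  homog : ∀ α, (x α).IsHomogeneous (d α)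
  invariant : ∀ g ∈ G, ∀ α, pback (g : GL (Fin n) ℂ).val (x α) = x α
  indep : AlgebraicIndependent ℂ x
  gen : ∀ F : MvPolynomial (Fin n) ℂ, (∀ g ∈ G, pback (g : GL (Fin n) ℂ).val F = F) →
    F ∈ Algebra.adjoin ℂ (Set.range x)

/-- An admissible triplet `(g, ζ, q)`; the degrees are arranged so that `d 0` is the highest. -/
structure AdmissibleTriplet [NeZero n] (G : Subgroup (GL (Fin n) ℂ)) (d : Fin n → ℕ)
    (g : GL (Fin n) ℂ) (ζ : ℂ) (q : Fin n → ℂ) : Prop where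
  prim : IsPrimitiveRoot ζ (d 0)
  reg : IsZetaRegular G g ζ
  regq : IsRegularVec G q
  eig : g.val *ᵥ q = ζ • q

/-- `P` gives a `(g,ζ)`-graded coordinate system: `g^* z^α = ζ^{d_α-1} z^α`. -/
def GradedCoords (g : GL (Fin n) ℂ) (ζ : ℂ) (d : Fin n → ℕ) (P : GL (Fin n) ℂ) : Prop :=
  ∀ α, pback (g⁻¹).val (coordPoly P α) = C (ζ ^ ((d α : ℤ) - 1)) * coordPoly P α

/-- The multi-index `e_β`. -/
def unitIdx (β : Fin n) : Fin n → ℕ := fun j => if j = β then 1 else 0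

/-- `x` is compatible with the coordinate system given by `P` at `q`:
`∂x^α/∂z^β (q) = δ^α_β`. -/
def Compatible (P : GL (Fin n) ℂ) (q : Fin n → ℂ)
    (x : Fin n → MvPolynomial (Fin n) ℂ) : Prop :=
  ∀ α β, zderivAt P (unitIdx β) (x α) q = if α = β then 1 else 0

/-- `x` is good: the derivatives `∂^a x^α/∂z^a` vanish at `q` for every `a ∈ I_α^{(0)}`. -/
def IsGood [NeZero n] (P : GL (Fin n) ℂ) (q : Fin n → ℂ) (d : Fin n → ℕ)
    (x : Fin n → MvPolynomial (Fin n) ℂ) : Prop :=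
  ∀ α (a : Fin n → ℕ), (∑ β, a β * d β) = d α → 2 ≤ ∑ β, a β →
    zderivAt P a (x α) q = 0

/-- Multi-index partial derivative of a function on `ℂ^n`. -/
def mpd (a : Fin n → ℕ) (f : (Fin n → ℂ) → ℂ) : (Fin n → ℂ) → ℂ :=
  (List.finRange n).foldr
    (fun i acc => (fun g v => fderiv ℂ g v (Pi.single i 1))^[a i] acc) f

/-- `f` is a rational function which is regular at `q`. -/
def RegRat (q : Fin n → ℂ) (f : (Fin n → ℂ) → ℂ) : Prop :=
  ∃ p s : MvPolynomial (Fin n) ℂ, eval q s ≠ 0 ∧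
    ∀ v, eval v s ≠ 0 → f v = eval v p / eval v s

/-- Condition `P(i)`: the value at `q` is diagonal and nonvanishing derivatives at `q`
satisfy `a·d + d_β = d_γ + k d_1` with `k ≥ i`. -/
def CondP [NeZero n] (d : Fin n → ℕ) (q : Fin n → ℂ) (i : ℕ)
    (M : Fin n → Fin n → (Fin n → ℂ) → ℂ) : Prop :=
  (∀ γ β, γ ≠ β → M γ β q = 0) ∧
    ∀ γ β (a : Fin n → ℕ), a ≠ 0 → mpd a (M γ β) q ≠ 0 →
      ∃ k : ℕ, i ≤ k ∧ (∑ α, a α * d α) + d β = d γ + k * d 0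

/-- Condition `Q(j,h)`: nonvanishing derivatives at `q` satisfy
`a·d + h + d_β = d_γ + k d_1` with `k ≥ j`. -/
def CondQ [NeZero n] (d : Fin n → ℕ) (q : Fin n → ℂ) (j h : ℕ)
    (M : Fin n → Fin n → (Fin n → ℂ) → ℂ) : Prop :=
  ∀ γ β (a : Fin n → ℕ), mpd a (M γ β) q ≠ 0 →
    ∃ k : ℕ, j ≤ k ∧ (∑ α, a α * d α) + h + d β = d γ + k * d 0

/-- Entrywise product of matrices of functions. -/
def matMulF (Xm Ym : Fin n → Fin n → (Fin n → ℂ) → ℂ) :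
    Fin n → Fin n → (Fin n → ℂ) → ℂ :=
  fun γ β v => ∑ ρ, Xm γ ρ v * Ym ρ β v

/-- The `(γ,β)` entry of the Jacobian matrix `J = (∂x^γ/∂z^β)`, expressed in the
coordinates `z = P u`, as a function on coordinate space. -/
def jacEntry (P : GL (Fin n) ℂ) (x : Fin n → MvPolynomial (Fin n) ℂ) (γ β : Fin n) :
    (Fin n → ℂ) → ℂ :=
  fun v => eval v (pderiv β (pback (P⁻¹).val (x γ)))
set_option maxRecDepth 8000

lemma pback_pback (M N : Matrix (Fin n) (Fin n) ℂ) (F : MvPolynomial (Fin n) ℂ) :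
    pback N (pback M F) = pback (M * N) F := by
  rw [show pback N (pback M F) = ((pback N).comp (pback M)) F from rfl]
  unfold pback
  rw [comp_aeval]
  have h : (fun i => (aeval fun i => ∑ j, C (N i j) * X j)
        (∑ j, C (M i j) * (X j : MvPolynomial (Fin n) ℂ)))
      = fun i => ∑ j, C ((M * N) i j) * (X j : MvPolynomial (Fin n) ℂ) := by
    funext i
    simp only [map_sum, _root_.map_mul, aeval_C, aeval_X, algebraMap_eq]
    simp_rw [Finset.mul_sum, ← mul_assoc, ← C_mul]
    rw [Finset.sum_comm]
    refine Finset.sum_congr rfl fun k _ => ?_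
    rw [← Finset.sum_mul, ← map_sum, Matrix.mul_apply]
  rw [h]

lemma linear_coeff (b : Fin n → ℂ) (k : Fin n) :
    coeff (Finsupp.single k 1) (∑ j, C (b j) * X j) = b k := by
  rw [coeff_sum]
  simp only [coeff_C_mul, coeff_X']
  rw [Finset.sum_eq_single k]
  · simp
  · intro j _ hj
    rw [if_neg, mul_zero]
    rw [Finsupp.single_left_inj one_ne_zero]
    exact hj
  · simp

lemma pback_diag_monomial (c : Fin n → ℂ) (s : Fin n →₀ ℕ) (b : ℂ) :
    pback (diagonal c) (monomial s b) = monomial s (b * ∏ i, c i ^ s i) := by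
  have hf : ∀ i, (∑ j, C (diagonal c i j) * (X j : MvPolynomial (Fin n) ℂ))
      = C (c i) * X i := by
    intro i
    rw [Finset.sum_eq_single i]
    · simp [diagonal]
    · intro j _ hj
      simp [diagonal_apply_ne _ (Ne.symm hj)]
    · simp
  unfold pback
  rw [aeval_monomial]
  simp_rw [hf]
  rw [show (algebraMap ℂ (MvPolynomial (Fin n) ℂ)) b = C b from rfl]
  rw [Finsupp.prod_fintype _ _ (fun i => pow_zero _)]
  simp_rw [mul_pow, ← C_pow]
  rw [Finset.prod_mul_distrib, ← map_prod]
  rw [monomial_eq, Finsupp.prod_fintype _ _ (fun i => pow_zero _), C_mul]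
  ring

lemma coeff_pback_diag (c : Fin n → ℂ) (F : MvPolynomial (Fin n) ℂ) (s : Fin n →₀ ℕ) :
    coeff s (pback (diagonal c) F) = (∏ i, c i ^ s i) * coeff s F := by
  conv_lhs => rw [← support_sum_monomial_coeff F]
  rw [map_sum, coeff_sum]
  simp_rw [pback_diag_monomial, coeff_monomial]
  rw [Finset.sum_ite_eq' F.support s]
  by_cases h : s ∈ F.support
  · rw [if_pos h]; ring
  · rw [if_neg h, notMem_support_iff.mp h, mul_zero]

lemma pback_smul_homog (c : ℂ) (M : Matrix (Fin n) (Fin n) ℂ) {F : MvPolynomial (Fin n) ℂ}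
    {m : ℕ} (h : F.IsHomogeneous m) :
    pback (c • M) F = C (c ^ m) * pback M F := by
  have hf : ∀ i, (∑ j, C ((c • M) i j) * (X j : MvPolynomial (Fin n) ℂ))
      = C c * ∑ j, C (M i j) * X j := by
    intro i
    rw [Finset.mul_sum]
    refine Finset.sum_congr rfl fun j _ => ?_
    have h1 : (c • M) i j = c * M i j := rfl
    rw [h1, ← mul_assoc, ← C_mul]
  have hpb : pback (c • M) = aeval fun i => C c * ∑ j, C (M i j) * (X j : MvPolynomial (Fin n) ℂ) := by
    unfold pback
    congr 1
    funext i
    exact hf i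
  conv_lhs => rw [← support_sum_monomial_coeff F]
  conv_rhs => rw [← support_sum_monomial_coeff F]
  rw [map_sum, map_sum, Finset.mul_sum]
  refine Finset.sum_congr rfl fun s hs => ?_
  have hdeg : (Finsupp.weight 1) s = m := h (mem_support_iff.mp hs)
  have hdeg' : ∑ i ∈ s.support, s i = m := by
    rw [← hdeg, Finsupp.weight_apply, Finsupp.sum]
    exact Finset.sum_congr rfl fun i _ => by simp
  have hdeg2 : ∑ i : Fin n, s i = m := by
    rw [← hdeg']
    exact (Finset.sum_subset (Finset.subset_univ _) (fun i _ hi => by simpa using hi)).symm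
  rw [hpb]
  unfold pback
  rw [aeval_monomial, aeval_monomial]
  rw [Finsupp.prod_fintype _ _ (fun i => pow_zero _),
    Finsupp.prod_fintype _ _ (fun i => pow_zero _)]
  simp_rw [mul_pow]
  rw [Finset.prod_mul_distrib, Finset.prod_pow_eq_pow_sum, hdeg2, ← C_pow]
  ring


lemma iter_pderiv_add (i : Fin n) (k : ℕ) (p q : MvPolynomial (Fin n) ℂ) :
    (fun p => pderiv i p)^[k] (p + q) =
      (fun p => pderiv i p)^[k] p + (fun p => pderiv i p)^[k] q := by
  induction k generalizing p q with
  | zero => rfl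
  | succ k ih => simp only [Function.iterate_succ_apply, map_add, ih]

lemma iter_pderiv_zero (i : Fin n) (k : ℕ) :
    (fun p => pderiv i p)^[k] (0 : MvPolynomial (Fin n) ℂ) = 0 := by
  induction k with
  | zero => rfl
  | succ k ih => rw [Function.iterate_succ_apply, map_zero, ih]

lemma mderiv_add (a : Fin n → ℕ) (p q : MvPolynomial (Fin n) ℂ) :
    mderiv a (p + q) = mderiv a p + mderiv a q := by
  unfold mderiv
  induction (List.finRange n) with
  | nil => rfl
  | cons i t ih => simp only [List.foldr_cons, ih, iter_pderiv_add]

lemma mderiv_zero (a : Fin n → ℕ) : mderiv a (0 : MvPolynomial (Fin n) ℂ) = 0 := by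
  unfold mderiv
  induction (List.finRange n) with
  | nil => rfl
  | cons i t ih => simp only [List.foldr_cons, ih, iter_pderiv_zero]

lemma mderiv_sum {X : Type*} (a : Fin n → ℕ) (t : Finset X) (f : X → MvPolynomial (Fin n) ℂ) :
    mderiv a (∑ s ∈ t, f s) = ∑ s ∈ t, mderiv a (f s) := by
  classical
  induction t using Finset.induction with
  | empty => simpa using mderiv_zero a
  | insert _ _ hx ih => rw [Finset.sum_insert hx, Finset.sum_insert hx, mderiv_add, ih]

lemma iter_pderiv_monomial (i : Fin n) (k : ℕ) (s : Fin n →₀ ℕ) (b : ℂ) :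
    (fun p => pderiv i p)^[k] (monomial s b) =
      monomial (s - Finsupp.single i k) (b * (s i).descFactorial k) := by
  induction k with
  | zero => simp
  | succ k ih =>
    rw [Function.iterate_succ_apply', ih, pderiv_monomial]
    congr 1
    · rw [tsub_tsub, ← Finsupp.single_add]
    · rw [Finsupp.tsub_apply, Finsupp.single_eq_same, Nat.descFactorial_succ]
      push_cast
      ring

lemma listsum_single_apply (a : Fin n → ℕ) (l : List (Fin n)) (i : Fin n) (hi : i ∉ l) :
    ((l.map fun j => Finsupp.single j (a j)).sum) i = 0 := by
  induction l with
  | nil => rfl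
  | cons j t ih =>
    rw [List.map_cons, List.sum_cons, Finsupp.add_apply]
    rw [Finsupp.single_apply, if_neg (by simp at hi; exact fun h => hi.1 h.symm),
      ih (by simp at hi; exact hi.2)]

lemma foldr_mderiv_monomial (a : Fin n → ℕ) (l : List (Fin n)) (hl : l.Nodup)
    (s : Fin n →₀ ℕ) (b : ℂ) :
    l.foldr (fun i acc => (fun p => pderiv i p)^[a i] acc) (monomial s b) =
      monomial (s - (l.map fun j => Finsupp.single j (a j)).sum)
        (b * (l.map fun j => ((s j).descFactorial (a j) : ℂ)).prod) := by
  induction l with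
  | nil => simp
  | cons i t ih =>
    have hit : i ∉ t := (List.nodup_cons.mp hl).1
    rw [List.foldr_cons, ih (List.nodup_cons.mp hl).2, iter_pderiv_monomial]
    rw [List.map_cons, List.sum_cons, List.map_cons, List.prod_cons]
    congr 1
    · rw [tsub_tsub, add_comm]
    · rw [Finsupp.tsub_apply, listsum_single_apply a t i hit, Nat.sub_zero]
      ring

lemma mderiv_monomial (a : Fin n → ℕ) (s : Fin n →₀ ℕ) (b : ℂ) :
    mderiv a (monomial s b) =
      monomial (s - Finsupp.equivFunOnFinite.symm a)
        (b * ∏ i, ((s i).descFactorial (a i) : ℂ)) := by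
  unfold mderiv
  rw [foldr_mderiv_monomial a _ (List.nodup_finRange n)]
  rw [← Fin.prod_univ_def]
  congr 2
  · rw [← Fin.sum_univ_def]
    ext j
    rw [Finsupp.tsub_apply, Finsupp.tsub_apply]
    congr 1
    rw [Finsupp.finset_sum_apply]
    simp only [Finsupp.single_apply]
    rw [Finset.sum_ite_eq' Finset.univ j (fun i => a i), if_pos (Finset.mem_univ j)]
    simp


lemma pback_linear (M : Matrix (Fin n) (Fin n) ℂ) (b : Fin n → ℂ) :
    pback M (∑ j, C (b j) * X j) = ∑ k, C (∑ j, b j * M j k) * X k := by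
  unfold pback
  rw [map_sum]
  simp only [_root_.map_mul, aeval_C, aeval_X, algebraMap_eq]
  simp_rw [Finset.mul_sum, ← mul_assoc, ← C_mul]
  rw [Finset.sum_comm]
  refine Finset.sum_congr rfl fun k _ => ?_
  rw [← Finset.sum_mul, ← map_sum]

theorem stmt_11 [NeZero n] (G : Subgroup (GL (Fin n) ℂ)) (hG : IsReflectionGroup G)
    (d : Fin n → ℕ) (hd : Antitone d)
    (x : Fin n → MvPolynomial (Fin n) ℂ) (hx : BasicInvariants G d x)
    (g : GL (Fin n) ℂ) (ζ : ℂ) (q : Fin n → ℂ) (hT : AdmissibleTriplet G d g ζ q)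
    (P : GL (Fin n) ℂ) (hP : GradedCoords g ζ d P)
    (hgood : IsGood P q d x) (hc : Compatible P q x)
    (β : Fin n) (a : Fin n → ℕ) (ha2 : 2 ≤ ∑ α, a α)
    (hnz : zderivAt P a (x β) q ≠ 0) :
    ∃ k : ℕ, 1 ≤ k ∧ (∑ α, a α * d α) = d β + k * d 0 := by

  classical
  have hd0pos : 0 < d 0 := hx.pos 0
  have hzeta0 : ζ ≠ 0 := hT.prim.ne_zero hd0pos.ne'
  set D : Matrix (Fin n) (Fin n) ℂ := diagonal (fun α => ζ ^ ((d α : ℤ) - 1)) with hDdef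
  set E : Matrix (Fin n) (Fin n) ℂ := diagonal (fun α => ζ ^ (d α)) with hEdef
  -- The matrix identity P * g⁻¹ = D * P from the graded coordinates hypothesis
  have hDP : P.val * (g⁻¹).val = D * P.val := by
    ext α k
    have h := congrArg (coeff (Finsupp.single k 1)) (hP α)
    rw [show coordPoly P α = ∑ j, C (P.val α j) * X j from rfl, pback_linear] at h
    rw [Finset.mul_sum] at h
    simp_rw [← mul_assoc, ← C_mul] at h
    rw [linear_coeff, linear_coeff] at h
    rw [Matrix.mul_apply, Matrix.diagonal_mul]
    exact h
  have hPinvP : (P⁻¹).val * P.val = 1 := P.inv_mul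
  have hPPinv : P.val * (P⁻¹).val = 1 := P.mul_inv
  have hgP : (g⁻¹).val * (P⁻¹).val = (P⁻¹).val * D := by
    rw [Units.eq_inv_mul_iff_mul_eq, ← mul_assoc, hDP, mul_assoc, hPPinv, mul_one]
  have hED : E = ζ • D := by
    rw [hEdef, hDdef]
    ext i j
    rcases eq_or_ne i j with rfl | hij
    · rw [Matrix.smul_apply, diagonal_apply_eq, diagonal_apply_eq, smul_eq_mul]
      rw [show (ζ : ℂ) ^ (d i) = ζ ^ ((d i : ℤ)) from (zpow_natCast ζ (d i)).symm]
      rw [mul_comm, ← zpow_add_one₀ hzeta0, sub_add_cancel]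
    · rw [Matrix.smul_apply, diagonal_apply_ne _ hij, diagonal_apply_ne _ hij,
        smul_eq_mul, mul_zero]
  have hgmem : (g⁻¹ : GL (Fin n) ℂ) ∈ G := inv_mem hT.reg.1
  have hinv : pback ((g⁻¹ : GL (Fin n) ℂ)).val (x β) = x β := hx.invariant g⁻¹ hgmem β
  set F : MvPolynomial (Fin n) ℂ := pback (P⁻¹).val (x β) with hFdef
  -- Key polynomial identity: F(E z) = ζ^{d β} F(z)
  have hEF : pback E F = C (ζ ^ d β) * F := by
    calc pback E F = pback ((P⁻¹).val * E) (x β) := pback_pback _ _ _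
      _ = pback (ζ • ((g⁻¹).val * (P⁻¹).val)) (x β) := by
          rw [hgP, hED, Matrix.mul_smul]
      _ = C (ζ ^ d β) * pback ((g⁻¹).val * (P⁻¹).val) (x β) :=
          pback_smul_homog ζ _ (hx.homog β)
      _ = C (ζ ^ d β) * F := by rw [← pback_pback, hinv]
  -- q' = P q is a fixed point of E
  set q' : Fin n → ℂ := P.val *ᵥ q with hq'def
  have hgq : (g⁻¹).val *ᵥ q = ζ⁻¹ • q := by
    have h0 : (g⁻¹).val *ᵥ (g.val *ᵥ q) = q := by
      rw [mulVec_mulVec, show (g⁻¹).val * g.val = 1 from g.inv_mul, one_mulVec]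
    rw [hT.eig, mulVec_smul] at h0
    have h1 := congrArg (fun v : Fin n → ℂ => ζ⁻¹ • v) h0
    simp only [smul_smul, inv_mul_cancel₀ hzeta0, one_smul] at h1
    exact h1
  have hEq : E *ᵥ q' = q' := by
    have hEP : E * P.val = ζ • (P.val * (g⁻¹).val) := by
      rw [hED, smul_mul_assoc, ← hDP]
    rw [hq'def, mulVec_mulVec, hEP, smul_mulVec, ← mulVec_mulVec, hgq,
      mulVec_smul, smul_smul, mul_inv_cancel₀ hzeta0, one_smul]
  have hq'eig : ∀ i, ζ ^ (d i) * q' i = q' i := by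
    intro i
    have h := congrFun hEq i
    rwa [hEdef, mulVec_diagonal] at h
  -- unpack the nonvanishing derivative
  have hnz' : eval q' (mderiv a F) ≠ 0 := hnz
  rw [show F = ∑ s ∈ F.support, monomial s (coeff s F) from
    (support_sum_monomial_coeff F).symm, mderiv_sum, map_sum] at hnz'
  obtain ⟨s, hs, hterm⟩ := Finset.exists_ne_zero_of_sum_ne_zero hnz'
  rw [mderiv_monomial, eval_monomial,
    Finsupp.prod_fintype _ _ (fun i => pow_zero _)] at hterm
  have hcoeff : coeff s F ≠ 0 := mem_support_iff.mp hs
  have hdesc : ∀ i, a i ≤ s i := by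
    intro i
    by_contra hlt
    push_neg at hlt
    have h0 : (∏ i, ((s i).descFactorial (a i) : ℂ)) = 0 :=
      Finset.prod_eq_zero (Finset.mem_univ i)
        (by rw [Nat.descFactorial_eq_zero_iff_lt.mpr hlt, Nat.cast_zero])
    rw [h0, mul_zero, zero_mul] at hterm
    exact hterm rfl
  have hq0 : ∀ i, a i < s i → q' i ≠ 0 := by
    intro i hlt hqi
    have hprod : (∏ i, q' i ^ ((s - Finsupp.equivFunOnFinite.symm a) i)) ≠ 0 :=
      right_ne_zero_of_mul hterm
    have hexp : (s - Finsupp.equivFunOnFinite.symm a) i = s i - a i := by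
      rw [Finsupp.tsub_apply]; simp
    apply hprod
    refine Finset.prod_eq_zero (Finset.mem_univ i) ?_
    rw [hexp, hqi, zero_pow (by omega)]
  -- the eigenvalue congruence on the exponent s
  have hcong := congrArg (coeff s) hEF
  rw [hEdef, coeff_pback_diag, coeff_C_mul] at hcong
  have hzz : ζ ^ (∑ i, s i * d i) = ζ ^ d β := by
    have h := mul_right_cancel₀ hcoeff hcong
    rw [← h]
    simp_rw [← pow_mul]
    rw [Finset.prod_pow_eq_pow_sum]
    congr 1
    exact Finset.sum_congr rfl fun i _ => mul_comm _ _
  -- divisibility of the extra degrees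
  have hdvd : ∀ i, a i < s i → d 0 ∣ d i := by
    intro i hlt
    have hqi := hq0 i hlt
    have h2 := hq'eig i
    have h1 : (ζ ^ d i - 1) * q' i = 0 := by linear_combination h2
    rcases mul_eq_zero.mp h1 with h3 | h3
    · exact (hT.prim.pow_eq_one_iff_dvd _).mp (by linear_combination h3)
    · exact absurd h3 hqi
  have hsum : ∑ i, s i * d i = (∑ i, a i * d i) + ∑ i, (s i - a i) * d i := by
    rw [← Finset.sum_add_distrib]
    refine Finset.sum_congr rfl fun i _ => ?_
    have := hdesc i
    rw [← add_mul]
    congr 1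
    omega
  have hdvd2 : d 0 ∣ ∑ i, (s i - a i) * d i := by
    refine Finset.dvd_sum fun i _ => ?_
    rcases eq_or_lt_of_le (hdesc i) with he | hlt
    · have h0 : s i - a i = 0 := by omega
      rw [h0, zero_mul]
      exact dvd_zero _
    · exact Dvd.dvd.mul_left (hdvd i hlt) _
  obtain ⟨t, ht⟩ := hdvd2
  have hz2 : ζ ^ (∑ i, a i * d i) = ζ ^ d β := by
    rw [hsum, ht, pow_add, pow_mul, hT.prim.pow_eq_one, one_pow, mul_one] at hzz
    exact hzz
  -- final arithmetic
  set A := ∑ i, a i * d i with hAdef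
  have hA2 : 2 ≤ A := le_trans ha2 (Finset.sum_le_sum fun i _ =>
    Nat.le_mul_of_pos_right _ (hx.pos i))
  have hBle : d β ≤ d 0 := hd (Fin.zero_le β)
  have hne : A ≠ d β := fun h => hnz (hgood β a h ha2)
  rcases lt_or_ge (d β) A with hlt | hle
  · have h1 : ζ ^ (A - d β) = 1 := by
      have h2 : ζ ^ (A - d β) * ζ ^ d β = 1 * ζ ^ d β := by
        rw [one_mul, ← pow_add, Nat.sub_add_cancel hlt.le, hz2]
      exact mul_right_cancel₀ (pow_ne_zero _ hzeta0) h2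
    have hdv : d 0 ∣ A - d β := (hT.prim.pow_eq_one_iff_dvd _).mp h1
    obtain ⟨k, hk⟩ := hdv
    refine ⟨k, ?_, ?_⟩
    · rcases Nat.eq_zero_or_pos k with rfl | h
      · simp only [Nat.mul_zero] at hk
        omega
      · exact h
    · exact (Nat.eq_add_of_sub_eq hlt.le hk).trans (by ring)
  · have hlt2 : A < d β := lt_of_le_of_ne hle hne
    have h1 : ζ ^ (d β - A) = 1 := by
      have h2 : ζ ^ (d β - A) * ζ ^ A = 1 * ζ ^ A := by
        rw [one_mul, ← pow_add, Nat.sub_add_cancel hlt2.le, hz2]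
      exact mul_right_cancel₀ (pow_ne_zero _ hzeta0) h2
    have hdv : d 0 ∣ d β - A := (hT.prim.pow_eq_one_iff_dvd _).mp h1
    have hle3 : d 0 ≤ d β - A := Nat.le_of_dvd (by omega) hdv
    omega


end
end

section
/- Let $d_1 > d_2 \geq \dots \geq d_n \geq 2$, $q \in \mathbb{C}^n$, and let $X$ be an $n\times n$ matrix of rational functions regular and invertible near $q$ satisfying condition $P(i)$ for $i \in \{0,1\}$. Then the inverse matrix $\tilde{X} = X^{-1}$ also satisfies condition $P(i)$. -/
open MvPolynomial Matrix

noncomputable section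

variable {n : ℕ}

def pdi (i : Fin n) (f : (Fin n → ℂ) → ℂ) : (Fin n → ℂ) → ℂ :=
  fun v => fderiv ℂ f v (Pi.single i 1)

lemma mpd_eq_foldr (a : Fin n → ℕ) (f : (Fin n → ℂ) → ℂ) :
    mpd a f = (List.finRange n).foldr (fun i acc => (pdi i)^[a i] acc) f := rfl

lemma foldr_congr {a b : Fin n → ℕ} (f : (Fin n → ℂ) → ℂ) (l : List (Fin n))
    (h : ∀ j ∈ l, a j = b j) :
    l.foldr (fun i acc => (pdi i)^[a i] acc) f
      = l.foldr (fun i acc => (pdi i)^[b i] acc) f := by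
  induction l with
  | nil => rfl
  | cons j t ih =>
    simp only [List.foldr_cons, h j (by simp), ih fun x hx => h x (by simp [hx])]

def addE (i : Fin n) (a : Fin n → ℕ) : Fin n → ℕ := fun j => if j = i then a j + 1 else a j

lemma mpd_succ (a : Fin n → ℕ) (i : Fin n) (h : ∀ j, j < i → a j = 0)
    (f : (Fin n → ℂ) → ℂ) : mpd (addE i a) f = pdi i (mpd a f) := by
  rw [mpd_eq_foldr, mpd_eq_foldr]
  have claim : ∀ l : List (Fin n), l.Pairwise (· < ·) → (∀ j ∈ l, j < i → a j = 0) →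
      l.foldr (fun j acc => (pdi j)^[addE i a j] acc) f
        = if i ∈ l then pdi i (l.foldr (fun j acc => (pdi j)^[a j] acc) f)
          else l.foldr (fun j acc => (pdi j)^[a j] acc) f := by
    intro l
    induction l with
    | nil => simp
    | cons j t ih =>
      intro hp hz
      have hp1 : ∀ x ∈ t, j < x := (List.pairwise_cons.1 hp).1
      have hp2 := (List.pairwise_cons.1 hp).2
      by_cases hji : j = i
      · subst hji
        have hit : j ∉ t := fun hmem => lt_irrefl j (hp1 j hmem)
        have ht : t.foldr (fun j' acc => (pdi j')^[addE j a j'] acc) f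
            = t.foldr (fun j' acc => (pdi j')^[a j'] acc) f := by
          apply foldr_congr
          intro x hx
          have : x ≠ j := fun hxi => hit (hxi ▸ hx)
          simp [addE, this]
        rw [List.foldr_cons, List.foldr_cons, ht, if_pos (by simp)]
        simp only [addE, if_pos rfl, if_true]
        exact Function.iterate_succ_apply' _ _ _
      · have haj : addE i a j = a j := by simp [addE, hji]
        rw [List.foldr_cons, List.foldr_cons, haj,
          ih hp2 (fun x hx hxi => hz x (by simp [hx]) hxi)]
        by_cases hit : i ∈ t
        · have hji' : j < i := lt_of_le_of_ne (le_of_lt (hp1 i hit)) hji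
          have : a j = 0 := hz j (by simp) hji'
          simp [this, hit, hji]
        · simp [hit, hji, Ne.symm]
  rw [claim (List.finRange n) (List.pairwise_lt_finRange n) (fun j _ => h j),
    if_pos (List.mem_finRange i)]

lemma mpd_zero (f : (Fin n → ℂ) → ℂ) : mpd (0 : Fin n → ℕ) f = f := by
  rw [mpd_eq_foldr]
  induction (List.finRange n) with
  | nil => rfl
  | cons j t ih => simpa using ih

lemma exists_decomp (a : Fin n → ℕ) (ha : a ≠ 0) :
    ∃ (i : Fin n) (b : Fin n → ℕ), a = addE i b ∧ (∀ j, j < i → b j = 0) ∧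
      (∑ j, b j) + 1 = ∑ j, a j := by
  classical
  have hne : (Finset.univ.filter (fun j => a j ≠ 0)).Nonempty := by
    by_contra h
    apply ha
    funext j
    simp only [Pi.zero_apply]
    by_contra hj
    exact h ⟨j, by simp [hj]⟩
  set i := (Finset.univ.filter (fun j => a j ≠ 0)).min' hne with hi
  have hai : a i ≠ 0 := by
    have := (Finset.univ.filter (fun j => a j ≠ 0)).min'_mem hne
    simpa using this
  refine ⟨i, fun j => if j = i then a j - 1 else a j, ?_, ?_, ?_⟩
  · funext j
    by_cases hj : j = i
    · subst hj; simp [addE]; omega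
    · simp [addE, hj]
  · intro j hj
    have hji : j ≠ i := ne_of_lt hj
    simp only [if_neg hji]
    by_contra hzero
    exact absurd (Finset.min'_le _ j (by simp [hzero])) (not_le.2 hj)
  · have : ∀ j, a j = (if j = i then a j - 1 else a j) + (if j = i then 1 else 0) := by
      intro j; by_cases hj : j = i <;> simp [hj] <;> omega
    calc (∑ j, if j = i then a j - 1 else a j) + 1
        = (∑ j, if j = i then a j - 1 else a j) + ∑ j, (if j = i then (1:ℕ) else 0) := by
          rw [Finset.sum_ite_eq' Finset.univ i (fun _ => (1:ℕ))]; simp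
      _ = ∑ j, ((if j = i then a j - 1 else a j) + (if j = i then 1 else 0)) := by
          rw [Finset.sum_add_distrib]
      _ = ∑ j, a j := by
          exact Finset.sum_congr rfl fun j _ => (this j).symm

lemma addE_ne_zero (i : Fin n) (b : Fin n → ℕ) : addE i b ≠ 0 := by
  intro h
  have := congrFun h i
  simp [addE] at this

lemma addE_add_right (i : Fin n) (b c : Fin n → ℕ) : b + addE i c = addE i (b + c) := by
  funext j; by_cases hj : j = i <;> simp [addE, hj] <;> ring

lemma addE_add_left (i : Fin n) (b c : Fin n → ℕ) : addE i b + c = addE i (b + c) := by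
  funext j; by_cases hj : j = i <;> simp [addE, hj] <;> ring

def Sm (W : Set (Fin n → ℂ)) (f : (Fin n → ℂ) → ℂ) : Prop :=
  ContDiffOn ℂ ((⊤ : ℕ∞) : WithTop ℕ∞) f W

section W
variable {W : Set (Fin n → ℂ)} (hW : IsOpen W)

lemma pdi_congr (hW : IsOpen W) {f g : (Fin n → ℂ) → ℂ} (h : Set.EqOn f g W) (i : Fin n) :
    Set.EqOn (pdi i f) (pdi i g) W := by
  intro v hv
  have hfg : f =ᶠ[nhds v] g := Filter.eventuallyEq_of_mem (hW.mem_nhds hv) h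
  simp only [pdi]
  rw [hfg.fderiv_eq]

lemma pdi_iter_congr (hW : IsOpen W) {f g : (Fin n → ℂ) → ℂ} (h : Set.EqOn f g W) (i : Fin n) (k : ℕ) :
    Set.EqOn ((pdi i)^[k] f) ((pdi i)^[k] g) W := by
  induction k with
  | zero => exact h
  | succ k ih =>
    rw [Function.iterate_succ_apply', Function.iterate_succ_apply']
    exact pdi_congr hW ih i

lemma mpd_congr (hW : IsOpen W) {f g : (Fin n → ℂ) → ℂ} (h : Set.EqOn f g W) (a : Fin n → ℕ) :
    Set.EqOn (mpd a f) (mpd a g) W := by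
  rw [mpd_eq_foldr, mpd_eq_foldr]
  induction (List.finRange n) with
  | nil => exact h
  | cons j t ih => exact pdi_iter_congr hW ih j (a j)

lemma Sm.pdi' (hW : IsOpen W) {f : (Fin n → ℂ) → ℂ} (hf : Sm W f) (i : Fin n) : Sm W (pdi i f) := by
  have h1 : ContDiffOn ℂ ((⊤ : ℕ∞) : WithTop ℕ∞) (fderiv ℂ f) W :=
    hf.fderiv_of_isOpen hW (by norm_cast)
  exact h1.clm_apply contDiffOn_const

lemma Sm.iter_pdi (hW : IsOpen W) {f : (Fin n → ℂ) → ℂ} (hf : Sm W f) (i : Fin n) (k : ℕ) :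
    Sm W ((pdi i)^[k] f) := by
  induction k with
  | zero => exact hf
  | succ k ih =>
    rw [Function.iterate_succ_apply']
    exact Sm.pdi' hW ih i

lemma Sm.mpd' (hW : IsOpen W) {f : (Fin n → ℂ) → ℂ} (hf : Sm W f) (a : Fin n → ℕ) :
    Sm W (mpd a f) := by
  rw [mpd_eq_foldr]
  induction (List.finRange n) with
  | nil => exact hf
  | cons j t ih => exact Sm.iter_pdi hW ih j (a j)

lemma Sm.diffAt (hW : IsOpen W) {f : (Fin n → ℂ) → ℂ} (hf : Sm W f) {v : Fin n → ℂ} (hv : v ∈ W) :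
    DifferentiableAt ℂ f v :=
  (hf.contDiffAt (hW.mem_nhds hv)).differentiableAt (by simp)

lemma pdi_add (hW : IsOpen W) {f g : (Fin n → ℂ) → ℂ} (hf : Sm W f) (hg : Sm W g) (i : Fin n)
    {v : Fin n → ℂ} (hv : v ∈ W) :
    pdi i (fun w => f w + g w) v = pdi i f v + pdi i g v := by
  simp only [pdi]
  rw [fderiv_fun_add (hf.diffAt hW hv) (hg.diffAt hW hv)]
  simp

lemma pdi_mul (hW : IsOpen W) {f g : (Fin n → ℂ) → ℂ} (hf : Sm W f) (hg : Sm W g) (i : Fin n)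
    {v : Fin n → ℂ} (hv : v ∈ W) :
    pdi i (fun w => f w * g w) v = f v * pdi i g v + g v * pdi i f v := by
  simp only [pdi]
  rw [fderiv_fun_mul (hf.diffAt hW hv) (hg.diffAt hW hv)]
  simp

lemma pdi_const (c : ℂ) (i : Fin n) : pdi i (fun _ => c) = fun _ => 0 := by
  funext v; simp [pdi]

lemma Sm.const (c : ℂ) : Sm W (fun _ => c) := contDiffOn_const

lemma Sm.mul' {f g : (Fin n → ℂ) → ℂ} (hf : Sm W f) (hg : Sm W g) :
    Sm W (fun w => f w * g w) := hf.mul hg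

lemma Sm.add' {f g : (Fin n → ℂ) → ℂ} (hf : Sm W f) (hg : Sm W g) :
    Sm W (fun w => f w + g w) := hf.add hg
end W

def fsum (l : List ((Fin n → ℂ) → ℂ)) : (Fin n → ℂ) → ℂ := fun v => (l.map (· v)).sum

lemma fsum_nil : fsum ([] : List ((Fin n → ℂ) → ℂ)) = fun _ => 0 := rfl

lemma fsum_cons (h : (Fin n → ℂ) → ℂ) (t : List ((Fin n → ℂ) → ℂ)) :
    fsum (h :: t) = fun v => h v + fsum t v := rfl

section W2
variable {W : Set (Fin n → ℂ)}

lemma Sm.fsum' (hW : IsOpen W) (l : List ((Fin n → ℂ) → ℂ)) (hl : ∀ h ∈ l, Sm W h) :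
    Sm W (fsum l) := by
  induction l with
  | nil => exact Sm.const 0
  | cons h t ih =>
    rw [fsum_cons]
    exact Sm.add' (hl h (by simp)) (ih fun x hx => hl x (by simp [hx]))

lemma pdi_fsum (hW : IsOpen W) (i : Fin n) (l : List ((Fin n → ℂ) → ℂ))
    (hl : ∀ h ∈ l, Sm W h) {v : Fin n → ℂ} (hv : v ∈ W) :
    pdi i (fsum l) v = fsum (l.map (pdi i)) v := by
  induction l with
  | nil =>
    rw [fsum_nil, List.map_nil, fsum_nil]
    exact congrFun (pdi_const 0 i) v
  | cons h t ih =>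
    rw [fsum_cons]
    rw [pdi_add hW (hl h (by simp)) (Sm.fsum' hW t fun x hx => hl x (by simp [hx])) i hv]
    rw [List.map_cons, fsum_cons]
    rw [ih fun x hx => hl x (by simp [hx])]

end W2

lemma list_sum_map_add {α : Type*} (l : List α) (f g : α → ℂ) :
    (l.map (fun t => f t + g t)).sum = (l.map f).sum + (l.map g).sum := by
  induction l with
  | nil => simp
  | cons h t ih => simp [ih]; ring

-- transport along eventual equality at q
lemma pdi_eventuallyEq {q : Fin n → ℂ} {f g : (Fin n → ℂ) → ℂ}
    (h : f =ᶠ[nhds q] g) (i : Fin n) : pdi i f =ᶠ[nhds q] pdi i g := by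
  have h' : ∀ᶠ v in nhds q, f =ᶠ[nhds v] g := eventually_eventually_nhds.2 h
  filter_upwards [h'] with v hv
  simp only [pdi]
  rw [hv.fderiv_eq]

lemma mpd_eventuallyEq {q : Fin n → ℂ} {f g : (Fin n → ℂ) → ℂ}
    (h : f =ᶠ[nhds q] g) (a : Fin n → ℕ) : mpd a f =ᶠ[nhds q] mpd a g := by
  rw [mpd_eq_foldr, mpd_eq_foldr]
  induction (List.finRange n) with
  | nil => exact h
  | cons j t ih =>
    simp only [List.foldr_cons]
    induction (a j) with
    | zero => exact ih
    | succ k ihk =>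
      rw [Function.iterate_succ_apply', Function.iterate_succ_apply']
      exact pdi_eventuallyEq ihk j

lemma mpd_const (c : ℂ) : ∀ (N : ℕ) (a : Fin n → ℕ), (∑ j, a j) ≤ N → a ≠ 0 →
    mpd a (fun _ : Fin n → ℂ => c) = fun _ => 0 := by
  intro N
  induction N with
  | zero =>
    intro a hs ha
    exfalso; apply ha; funext j
    have := Finset.sum_eq_zero_iff.1 (Nat.le_zero.1 hs) j (Finset.mem_univ j)
    simpa using this
  | succ N ih =>
    intro a hs ha
    obtain ⟨i, b, rfl, hb0, hsum⟩ := exists_decomp a ha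
    rw [mpd_succ b i hb0]
    by_cases hb : b = 0
    · subst hb; rw [mpd_zero]; exact pdi_const c i
    · rw [ih b (by omega) hb]; exact pdi_const 0 i

lemma contDiff_eval (p : MvPolynomial (Fin n) ℂ) :
    ContDiff ℂ ((⊤ : ℕ∞) : WithTop ℕ∞) (fun v : Fin n → ℂ => eval v p) := by
  induction p using MvPolynomial.induction_on with
  | C a => simpa using contDiff_const (c := a)
  | add p q hp hq => simpa using hp.add hq
  | mul_X p i hp =>
    have hcoord : ContDiff ℂ ((⊤ : ℕ∞) : WithTop ℕ∞) (fun v : Fin n → ℂ => v i) :=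
      (ContinuousLinearMap.proj (R := ℂ) (φ := fun _ : Fin n => ℂ) i).contDiff
    simpa using hp.mul hcoord

section W3
variable {W : Set (Fin n → ℂ)}

lemma pdi_finsum (hW : IsOpen W) {M : ℕ} (i : Fin n) (h : Fin M → (Fin n → ℂ) → ℂ)
    (hh : ∀ ρ, Sm W (h ρ)) {v : Fin n → ℂ} (hv : v ∈ W) :
    pdi i (fun w => ∑ ρ, h ρ w) v = ∑ ρ, pdi i (h ρ) v := by
  simp only [pdi]
  rw [fderiv_fun_sum fun ρ _ => (hh ρ).diffAt hW hv]
  simp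

lemma mpd_finsum (hW : IsOpen W) {M : ℕ} (h : Fin M → (Fin n → ℂ) → ℂ)
    (hh : ∀ ρ, Sm W (h ρ)) :
    ∀ (N : ℕ) (a : Fin n → ℕ), (∑ j, a j) ≤ N → ∀ v ∈ W,
      mpd a (fun w => ∑ ρ, h ρ w) v = ∑ ρ, mpd a (h ρ) v := by
  intro N
  induction N with
  | zero =>
    intro a hs v hv
    have ha : a = 0 := by
      funext j
      have := Finset.sum_eq_zero_iff.1 (Nat.le_zero.1 hs) j (Finset.mem_univ j)
      simpa using this
    subst ha
    rw [mpd_zero]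
    exact Finset.sum_congr rfl fun ρ _ => by rw [mpd_zero]
  | succ N ih =>
    intro a hs v hv
    by_cases ha : a = 0
    · subst ha
      rw [mpd_zero]
      exact Finset.sum_congr rfl fun ρ _ => by rw [mpd_zero]
    obtain ⟨i, b, rfl, hb0, hsum⟩ := exists_decomp a ha
    rw [mpd_succ b i hb0]
    have hEq : Set.EqOn (mpd b (fun w => ∑ ρ, h ρ w)) (fun w => ∑ ρ, mpd b (h ρ) w) W :=
      fun w hw => ih b (by omega) w hw
    rw [pdi_congr hW hEq i hv,
      pdi_finsum hW i (fun ρ => mpd b (h ρ)) (fun ρ => (hh ρ).mpd' hW b) hv]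
    exact Finset.sum_congr rfl fun ρ _ => by
      rw [← mpd_succ b i hb0 (h ρ)]

lemma leib (hW : IsOpen W) :
    ∀ (N : ℕ) (a : Fin n → ℕ), (∑ j, a j) ≤ N →
    ∀ f g : (Fin n → ℂ) → ℂ, Sm W f → Sm W g →
    ∃ L : List ((Fin n → ℕ) × (Fin n → ℕ)),
      (∀ t ∈ L, t.1 + t.2 = a ∧ t.2 ≠ 0) ∧
      ∀ v ∈ W, mpd a (fun w => f w * g w) v =
        mpd a f v * g v + (L.map (fun t => mpd t.1 f v * mpd t.2 g v)).sum := by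
  intro N
  induction N with
  | zero =>
    intro a hs f g hf hg
    have ha : a = 0 := by
      funext j
      have := Finset.sum_eq_zero_iff.1 (Nat.le_zero.1 hs) j (Finset.mem_univ j)
      simpa using this
    subst ha
    exact ⟨[], by simp, fun v _ => by simp [mpd_zero]⟩
  | succ N ih =>
    intro a hs f g hf hg
    by_cases ha : a = 0
    · subst ha
      exact ⟨[], by simp, fun v _ => by simp [mpd_zero]⟩
    obtain ⟨i, b, rfl, hb0, hsum⟩ := exists_decomp a ha
    obtain ⟨L', hL'c, hL'e⟩ := ih b (by omega) f g hf hg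
    -- all first/second components of L' vanish below i
    have hcomp : ∀ t ∈ L', (∀ j, j < i → t.1 j = 0) ∧ (∀ j, j < i → t.2 j = 0) := by
      intro t ht
      have h1 := (hL'c t ht).1
      constructor <;> intro j hj <;>
        · have := congrFun h1 j
          have hbj := hb0 j hj
          simp only [Pi.add_apply] at this
          omega
    -- list of functions whose sum is mpd b (f*g) on W
    set Lfun : List ((Fin n → ℂ) → ℂ) :=
      (fun w => mpd b f w * g w) :: L'.map (fun t w => mpd t.1 f w * mpd t.2 g w) with hLfun
    have hLfunSm : ∀ h ∈ Lfun, Sm W h := by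
      intro h hh
      rw [hLfun] at hh
      rcases List.mem_cons.1 hh with h1 | h2
      · subst h1; exact Sm.mul' (hf.mpd' hW b) hg
      · obtain ⟨t, ht, rfl⟩ := List.mem_map.1 h2
        exact Sm.mul' (hf.mpd' hW t.1) (hg.mpd' hW t.2)
    have hEq : Set.EqOn (mpd b (fun w => f w * g w)) (fsum Lfun) W := by
      intro w hw
      rw [hL'e w hw, hLfun, fsum_cons]
      simp only [fsum, List.map_map]
      rfl
    refine ⟨(b, addE i 0) :: (L'.map (fun t => (addE i t.1, t.2))
        ++ L'.map (fun t => (t.1, addE i t.2))), ?_, ?_⟩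
    · intro t ht
      rcases List.mem_cons.1 ht with h1 | h2
      · subst h1
        constructor
        · exact (addE_add_right i b 0).trans (by simp)
        · exact addE_ne_zero i 0
      rcases List.mem_append.1 h2 with h3 | h3
      · obtain ⟨t', ht', rfl⟩ := List.mem_map.1 h3
        exact ⟨(addE_add_left i t'.1 t'.2).trans (by rw [(hL'c t' ht').1]), (hL'c t' ht').2⟩
      · obtain ⟨t', ht', rfl⟩ := List.mem_map.1 h3
        refine ⟨(addE_add_right i t'.1 t'.2).trans (by rw [(hL'c t' ht').1]), addE_ne_zero i t'.2⟩
    · intro v hv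
      rw [mpd_succ b i hb0, pdi_congr hW hEq i hv, pdi_fsum hW i Lfun hLfunSm hv]
      -- expand the fsum of the mapped list
      rw [hLfun, List.map_cons]
      simp only [fsum_cons]
      -- head term
      have hhead : pdi i (fun w => mpd b f w * g w) v
          = mpd b f v * mpd (addE i 0) g v + g v * mpd (addE i b) f v := by
        have hg0 : mpd (addE i 0) g = pdi i g := by
          rw [mpd_succ 0 i (fun _ _ => rfl) g, mpd_zero]
        rw [pdi_mul hW (hf.mpd' hW b) hg i hv, ← mpd_succ b i hb0 f, hg0]
      -- tail terms
      have htail : fsum ((L'.map (fun t w => mpd t.1 f w * mpd t.2 g w)).map (pdi i)) v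
          = (L'.map (fun t => mpd (addE i t.1) f v * mpd t.2 g v)).sum
            + (L'.map (fun t => mpd t.1 f v * mpd (addE i t.2) g v)).sum := by
        have hterm : ∀ t ∈ L', pdi i (fun w => mpd t.1 f w * mpd t.2 g w) v
            = mpd (addE i t.1) f v * mpd t.2 g v + mpd t.1 f v * mpd (addE i t.2) g v := by
          intro t ht
          rw [pdi_mul hW (hf.mpd' hW t.1) (hg.mpd' hW t.2) i hv,
            ← mpd_succ t.1 i (hcomp t ht).1 f, ← mpd_succ t.2 i (hcomp t ht).2 g]
          ring
        calc fsum ((L'.map (fun t w => mpd t.1 f w * mpd t.2 g w)).map (pdi i)) v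
            = (L'.map (fun t => mpd (addE i t.1) f v * mpd t.2 g v
                + mpd t.1 f v * mpd (addE i t.2) g v)).sum := by
              simp only [fsum, List.map_map]
              exact congrArg List.sum (List.map_congr_left fun t ht => hterm t ht)
          _ = _ := List.sum_map_add
      rw [hhead, htail]
      simp only [List.map_cons, List.map_append, List.sum_cons, List.sum_append,
        List.map_map, Function.comp_def]
      ring


end W3

theorem stmt_15 [NeZero n] (d : Fin n → ℕ) (hd : Antitone d)
    (hd1 : ∀ α : Fin n, α ≠ 0 → d α < d 0) (hd2 : ∀ α, 2 ≤ d α)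
    (q : Fin n → ℂ) (i : ℕ) (hi : i ≤ 1)
    (Xm Ym : Fin n → Fin n → (Fin n → ℂ) → ℂ)
    (hXr : ∀ γ β, RegRat q (Xm γ β)) (hYr : ∀ γ β, RegRat q (Ym γ β))
    (hinv : Filter.Eventually (fun v => ∀ γ β : Fin n,
        (∑ ρ, Ym γ ρ v * Xm ρ β v) = (if γ = β then (1 : ℂ) else 0) ∧
        (∑ ρ, Xm γ ρ v * Ym ρ β v) = (if γ = β then (1 : ℂ) else 0)) (nhds q))
    (hX : CondP d q i Xm) :
    CondP d q i Ym := by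
  classical
  obtain ⟨hXdiag, hXder⟩ := hX
  choose pX sX hsX hXeq using hXr
  choose pY sY hsY hYeq using hYr
  have hcont : ∀ p : MvPolynomial (Fin n) ℂ, Continuous fun v : Fin n → ℂ => eval v p :=
    fun p => (contDiff_eval p).continuous
  have hden : ∀ᶠ v in nhds q, ∀ γ β : Fin n,
      eval v (sX γ β) ≠ 0 ∧ eval v (sY γ β) ≠ 0 := by
    rw [Filter.eventually_all]; intro γ
    rw [Filter.eventually_all]; intro β
    exact ((hcont _).continuousAt.eventually_ne (hsX γ β)).and
      ((hcont _).continuousAt.eventually_ne (hsY γ β))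
  set E : Set (Fin n → ℂ) := {v | (∀ γ β : Fin n,
      (∑ ρ, Ym γ ρ v * Xm ρ β v) = (if γ = β then (1 : ℂ) else 0) ∧
      (∑ ρ, Xm γ ρ v * Ym ρ β v) = (if γ = β then (1 : ℂ) else 0)) ∧
      ∀ γ β : Fin n, eval v (sX γ β) ≠ 0 ∧ eval v (sY γ β) ≠ 0} with hEdef
  have hEmem : E ∈ nhds q := hinv.and hden
  set W := interior E with hWdef
  have hWo : IsOpen W := isOpen_interior
  have hWE : W ⊆ E := interior_subset
  have hqW : q ∈ W := mem_interior_iff_mem_nhds.2 hEmem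
  have hqE : q ∈ E := hWE hqW
  set F : Fin n → Fin n → (Fin n → ℂ) → ℂ :=
    fun γ β v => eval v (pX γ β) / eval v (sX γ β) with hFdef
  set G : Fin n → Fin n → (Fin n → ℂ) → ℂ :=
    fun γ β v => eval v (pY γ β) / eval v (sY γ β) with hGdef
  have hFX : ∀ γ β, ∀ v ∈ E, Xm γ β v = F γ β v :=
    fun γ β v hv => hXeq γ β v (hv.2 γ β).1
  have hGY : ∀ γ β, ∀ v ∈ E, Ym γ β v = G γ β v :=
    fun γ β v hv => hYeq γ β v (hv.2 γ β).2
  have hFXq : ∀ γ β, Xm γ β =ᶠ[nhds q] F γ β := by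
    intro γ β; filter_upwards [hEmem] with v hv using hFX γ β v hv
  have hGYq : ∀ γ β, Ym γ β =ᶠ[nhds q] G γ β := by
    intro γ β; filter_upwards [hEmem] with v hv using hGY γ β v hv
  have hSmF : ∀ γ β, Sm W (F γ β) := fun γ β =>
    ContDiffOn.div ((contDiff_eval _).contDiffOn) ((contDiff_eval _).contDiffOn)
      (fun v hv => ((hWE hv).2 γ β).1)
  have hSmG : ∀ γ β, Sm W (G γ β) := fun γ β =>
    ContDiffOn.div ((contDiff_eval _).contDiffOn) ((contDiff_eval _).contDiffOn)
      (fun v hv => ((hWE hv).2 γ β).2)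
  have hid : ∀ γ β, ∀ v ∈ W, (∑ ρ, G γ ρ v * F ρ β v) = (if γ = β then (1 : ℂ) else 0) := by
    intro γ β v hv
    have hE' := hWE hv
    calc (∑ ρ, G γ ρ v * F ρ β v) = ∑ ρ, Ym γ ρ v * Xm ρ β v :=
          Finset.sum_congr rfl fun ρ _ => by rw [hGY γ ρ v hE', hFX ρ β v hE']
      _ = _ := (hE'.1 γ β).1
  have hXββ : ∀ β, Xm β β q ≠ 0 := by
    intro β h0
    have h1 := (hqE.1 β β).1
    rw [Finset.sum_eq_single β (fun ρ _ hρ => by rw [hXdiag ρ β hρ, mul_zero])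
      (fun h => absurd (Finset.mem_univ β) h), h0, mul_zero, if_pos rfl] at h1
    exact zero_ne_one h1
  have hYdiag : ∀ γ β, γ ≠ β → Ym γ β q = 0 := by
    intro γ β hγβ
    have h1 := (hqE.1 γ β).1
    rw [Finset.sum_eq_single β (fun ρ _ hρ => by rw [hXdiag ρ β hρ, mul_zero])
      (fun h => absurd (Finset.mem_univ β) h), if_neg hγβ] at h1
    exact (mul_eq_zero.1 h1).resolve_right (hXββ β)
  refine ⟨hYdiag, ?_⟩
  have hmpdX : ∀ ρ β c, mpd c (Xm ρ β) q = mpd c (F ρ β) q :=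
    fun ρ β c => (mpd_eventuallyEq (hFXq ρ β) c).eq_of_nhds
  have hmpdY : ∀ γ ρ b, mpd b (Ym γ ρ) q = mpd b (G γ ρ) q :=
    fun γ ρ b => (mpd_eventuallyEq (hGYq γ ρ) b).eq_of_nhds
  have hFq : ∀ ρ β, F ρ β q = Xm ρ β q := fun ρ β => (hFX ρ β q hqE).symm
  have hGq : ∀ γ ρ, G γ ρ q = Ym γ ρ q := fun γ ρ => (hGY γ ρ q hqE).symm
  have key : ∀ (N : ℕ) (a : Fin n → ℕ), (∑ j, a j) ≤ N → ∀ γ β, a ≠ 0 →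
      mpd a (G γ β) q ≠ 0 →
      ∃ k, i ≤ k ∧ (∑ α, a α * d α) + d β = d γ + k * d 0 := by
    intro N
    induction N with
    | zero =>
      intro a hs γ β ha _
      exfalso; apply ha; funext j
      simp only [Pi.zero_apply]
      exact Finset.sum_eq_zero_iff.1 (Nat.le_zero.1 hs) j (Finset.mem_univ j)
    | succ N IH =>
      intro a hs γ β ha hne
      have hzero : mpd a (fun v => ∑ ρ, G γ ρ v * F ρ β v) q = 0 := by
        have hEq : Set.EqOn (fun v => ∑ ρ, G γ ρ v * F ρ β v)
            (fun _ => (if γ = β then (1 : ℂ) else 0)) W := fun v hv => hid γ β v hv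
        rw [(mpd_congr hWo hEq a) hqW, mpd_const _ (∑ j, a j) a le_rfl ha]
      have hsplit : mpd a (fun v => ∑ ρ, G γ ρ v * F ρ β v) q
          = ∑ ρ, mpd a (fun v => G γ ρ v * F ρ β v) q :=
        mpd_finsum hWo (fun ρ v => G γ ρ v * F ρ β v)
          (fun ρ => Sm.mul' (hSmG γ ρ) (hSmF ρ β)) (∑ j, a j) a le_rfl q hqW
      choose L hLc hLe using fun ρ : Fin n =>
        leib hWo (∑ j, a j) a le_rfl (G γ ρ) (F ρ β) (hSmG γ ρ) (hSmF ρ β)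
      have hsum0 : ∑ ρ, (mpd a (G γ ρ) q * F ρ β q
          + ((L ρ).map (fun t => mpd t.1 (G γ ρ) q * mpd t.2 (F ρ β) q)).sum) = 0 := by
        calc ∑ ρ, (mpd a (G γ ρ) q * F ρ β q
              + ((L ρ).map (fun t => mpd t.1 (G γ ρ) q * mpd t.2 (F ρ β) q)).sum)
            = ∑ ρ, mpd a (fun v => G γ ρ v * F ρ β v) q :=
              Finset.sum_congr rfl fun ρ _ => (hLe ρ q hqW).symm
          _ = mpd a (fun v => ∑ ρ, G γ ρ v * F ρ β v) q := hsplit.symm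
          _ = 0 := hzero
      have htop : ∑ ρ, mpd a (G γ ρ) q * F ρ β q = mpd a (G γ β) q * F β β q :=
        Finset.sum_eq_single β (fun ρ _ hρ => by rw [hFq ρ β, hXdiag ρ β hρ, mul_zero])
          (fun h => absurd (Finset.mem_univ β) h)
      rw [Finset.sum_add_distrib, htop] at hsum0
      have hneX : mpd a (G γ β) q * F β β q ≠ 0 := by
        rw [hFq β β]; exact mul_ne_zero hne (hXββ β)
      have hrest : (∑ ρ, ((L ρ).map
          (fun t => mpd t.1 (G γ ρ) q * mpd t.2 (F ρ β) q)).sum) ≠ 0 := by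
        intro h
        rw [h, add_zero] at hsum0
        exact hneX hsum0
      obtain ⟨ρ, _, hρne⟩ := Finset.exists_ne_zero_of_sum_ne_zero hrest
      have hterm : ∃ t ∈ L ρ, mpd t.1 (G γ ρ) q * mpd t.2 (F ρ β) q ≠ 0 := by
        by_contra h
        push_neg at h
        refine hρne (List.sum_eq_zero ?_)
        intro x hx
        obtain ⟨t, ht, rfl⟩ := List.mem_map.1 hx
        exact h t ht
      obtain ⟨t, htL, htne⟩ := hterm
      obtain ⟨hts, htc⟩ := hLc ρ t htL
      have hb : mpd t.1 (G γ ρ) q ≠ 0 := fun h => htne (by rw [h, zero_mul])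
      have hc : mpd t.2 (F ρ β) q ≠ 0 := fun h => htne (by rw [h, mul_zero])
      have hcX : mpd t.2 (Xm ρ β) q ≠ 0 := by rw [hmpdX ρ β t.2]; exact hc
      obtain ⟨k₂, hk₂i, hk₂⟩ := hXder ρ β t.2 htc hcX
      by_cases hb0 : t.1 = 0
      · rw [hb0, mpd_zero] at hb
        have hργ : ρ = γ := by
          by_contra hρ
          exact hb (by rw [hGq γ ρ]; exact hYdiag γ ρ (Ne.symm hρ))
        have hca : t.2 = a := by rw [hb0, zero_add] at hts; exact hts
        rw [← hca, ← hργ]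
        exact ⟨k₂, hk₂i, hk₂⟩
      · have hsumb : (∑ j, t.1 j) + (∑ j, t.2 j) = ∑ j, a j := by
          rw [← Finset.sum_add_distrib]
          exact Finset.sum_congr rfl fun j _ => congrFun hts j
        have hc1 : 1 ≤ ∑ j, t.2 j := by
          by_contra h
          push_neg at h
          apply htc; funext j
          simp only [Pi.zero_apply]
          exact Finset.sum_eq_zero_iff.1 (by omega) j (Finset.mem_univ j)
        obtain ⟨k₁, hk₁i, hk₁⟩ := IH t.1 (by omega) γ ρ hb0 hb
        refine ⟨k₁ + k₂, le_trans hk₁i (Nat.le_add_right _ _), ?_⟩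
        have had : ∑ α, a α * d α = (∑ α, t.1 α * d α) + ∑ α, t.2 α * d α := by
          rw [← Finset.sum_add_distrib]
          refine Finset.sum_congr rfl fun α _ => ?_
          have h := congrFun hts α
          simp only [Pi.add_apply] at h
          rw [← h, add_mul]
        have hmul : (k₁ + k₂) * d 0 = k₁ * d 0 + k₂ * d 0 := add_mul _ _ _
        linarith [hk₁, hk₂]
  intro γ β a ha hne
  refine key (∑ j, a j) a le_rfl γ β ha ?_
  rw [← hmpdY γ β a]
  exact hne


end
end
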